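/- Let P, I, g be positive integers such that P divides I, I divides P + 1 - g (as integers), and I divides 2g - 2. Then P divides g - 1, I divides 2P, and if I = 2P then (g-1)/P is odd. -/

import Mathlib

/-!
Write `n = g - 1`, so the hypotheses read `I ∣ P - n` and `I ∣ 2n`. Since `P ∣ I`, also
`P ∣ P - n`, hence `P ∣ n`; and `2P = 2(P - n) + 2n` is divisible by `I`. If `I = 2P`, then
`P - n = 2Pm` gives `n / P = 1 - 2m`.
-/

theorem dvd_two_mul_of_dvd_sub_of_dvd_two_mul {R : Type*} [CommRing R] {a b c : R}
    (hbc : a ∣ b - c) (hc : a ∣ 2 * c) : a ∣ 2 * b := by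
  have h : 2 * b = 2 * (b - c) + 2 * c := by ring
  rw [h]
  exact dvd_add (hbc.mul_left 2) hc

theorem Int.odd_ediv_of_two_mul_dvd_sub {p n : ℤ} (hp : p ≠ 0) (h : 2 * p ∣ p - n) :
    Odd (n / p) := by
  obtain ⟨m, hm⟩ := h
  have hn : n = p * (1 - 2 * m) := by linear_combination -hm
  rw [hn, Int.mul_ediv_cancel_left _ hp]
  exact ⟨-m, by ring⟩

theorem lichtenbaum_conditions_general (P I g : ℤ) (hP : 0 < P)
    (hPI : P ∣ I) (h1 : I ∣ P + 1 - g) (h2 : I ∣ 2 * g - 2) :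
    P ∣ g - 1 ∧ I ∣ 2 * P ∧ (I = 2 * P → Odd ((g - 1) / P)) := by
  rw [show P + 1 - g = P - (g - 1) by ring] at h1
  rw [show 2 * g - 2 = 2 * (g - 1) by ring] at h2
  refine ⟨(dvd_sub_right dvd_rfl).mp (hPI.trans h1),
    dvd_two_mul_of_dvd_sub_of_dvd_two_mul h1 h2, fun hI2P => ?_⟩
  exact Int.odd_ediv_of_two_mul_dvd_sub hP.ne' (hI2P ▸ h1)

/-- Lichtenbaum's conditions on period `P`, index `I` and genus `g`. -/
theorem lichtenbaum_conditions (P I g : ℤ) (hP : 0 < P) (hI : 0 < I) (hg : 0 < g)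
    (hPI : P ∣ I) (h1 : I ∣ P + 1 - g) (h2 : I ∣ 2 * g - 2) :
    P ∣ g - 1 ∧ I ∣ 2 * P ∧ (I = 2 * P → Odd ((g - 1) / P)) :=
  lichtenbaum_conditions_general P I g hP hPI h1 h2
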